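/- arXiv:1201.2965 — 7 statements merged into one kernel-verified Lean document; each statement's English description precedes it below -/
import Mathlib

section
/- Let G be a group with finite generating set S and let H ≤ G. For g ∈ G, g lies in Comm(H,G) if and only if the Hausdorff distance between the cosets H and gH in the Cayley graph Γ(G,S) (with the word metric) is finite. -/
/-!
Write `B K = (S ∪ S⁻¹ ∪ {1}) ^ K` for the ball of radius `K` of the word metric, so that the
`K`-neighbourhood of a set `Y` is `Y * B K`. The balls are finite and exhaust `G`, hence `X` lies in
a bounded neighbourhood of `Y` iff `X ⊆ Y * F` for a finite set `F`. For subgroups `A` and `L`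
this says that `A` meets only finitely many right cosets of `L`, i.e. that `L ⊓ A` has finite
index in `A`. As `gH = (gHg⁻¹)g` and right translations preserve the finiteness condition, the two
halves of "the Hausdorff distance of `H` and `gH` is finite" become the two finite-index
conditions defining `g ∈ Comm(H,G)`.
-/

open Pointwise Filter

theorem Set.Finite.pow {M : Type*} [Monoid M] {T : Set M} (hT : T.Finite) (n : ℕ) :
    (T ^ n).Finite := by
  induction n with
  | zero => exact Set.finite_one
  | succ n ih => rw [pow_succ]; exact ih.mul hT

section CoarseContainment

variable {G : Type*} [Group G]

/-- The metric-free form of "`X` lies in a bounded neighbourhood of `Y`" for a word metric. -/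
def IsCoveredByFiniteTranslates (X Y : Set G) : Prop :=
  ∃ F : Set G, F.Finite ∧ X ⊆ Y * F

theorem isCoveredByFiniteTranslates_mul_singleton_right_iff {X Y : Set G} (g : G) :
    IsCoveredByFiniteTranslates X (Y * {g}) ↔ IsCoveredByFiniteTranslates X Y := by
  constructor
  · rintro ⟨F, hF, hX⟩
    exact ⟨{g} * F, (Set.finite_singleton g).mul hF, by rwa [← mul_assoc]⟩
  · rintro ⟨F, hF, hX⟩
    refine ⟨{g⁻¹} * F, (Set.finite_singleton _).mul hF, ?_⟩
    rwa [← mul_assoc, mul_assoc Y, Set.singleton_mul_singleton, mul_inv_cancel,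
      Set.singleton_one, mul_one]

theorem isCoveredByFiniteTranslates_mul_singleton_left_iff {X Y : Set G} (g : G) :
    IsCoveredByFiniteTranslates (X * {g}) Y ↔ IsCoveredByFiniteTranslates X Y := by
  constructor
  · rintro ⟨F, hF, hX⟩
    refine ⟨F * {g⁻¹}, hF.mul (Set.finite_singleton _), ?_⟩
    calc X = X * {g} * {g⁻¹} := by
          rw [mul_assoc, Set.singleton_mul_singleton, mul_inv_cancel, Set.singleton_one, mul_one]
      _ ⊆ Y * (F * {g⁻¹}) := by rw [← mul_assoc]; exact Set.mul_subset_mul_right hX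
  · rintro ⟨F, hF, hX⟩
    exact ⟨F * {g}, hF.mul (Set.finite_singleton _), by
      rw [← mul_assoc]; exact Set.mul_subset_mul_right hX⟩

/- `A ⧸ L.subgroupOf A` consists of left cosets; inverting representatives turns them into the
right cosets that appear in `L * F`. -/
theorem Subgroup.relIndex_ne_zero_iff_isCoveredByFiniteTranslates (L A : Subgroup G) :
    L.relIndex A ≠ 0 ↔ IsCoveredByFiniteTranslates (A : Set G) L := by
  rw [← isFiniteRelIndex_iff_relIndex_ne_zero, isFiniteRelIndex_iff_finiteIndex,
    finiteIndex_iff_finite_quotient]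
  constructor
  · intro _
    refine ⟨Set.range fun q : A ⧸ L.subgroupOf A => ((q.out : A) : G)⁻¹, Set.finite_range _,
      fun a ha => ?_⟩
    obtain ⟨l, hl⟩ := QuotientGroup.mk_out_eq_mul (L.subgroupOf A) (⟨a, ha⟩⁻¹ : A)
    have ha_eq : a = l * ((QuotientGroup.mk (⟨a, ha⟩⁻¹ : A) : A ⧸ L.subgroupOf A).out : G)⁻¹ := by
      rw [hl]; simp
    exact ha_eq ▸ Set.mul_mem_mul (mem_subgroupOf.mp l.2) ⟨_, rfl⟩
  · rintro ⟨F, hF, hA⟩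
    have hcover : ∀ a : A, ∃ f : F, (a : G) * (f : G)⁻¹ ∈ L := fun a => by
      obtain ⟨l, hl, f, hf, hlf⟩ := hA a.2
      exact ⟨⟨f, hf⟩, by simpa [← hlf] using hl⟩
    choose f hf using hcover
    have := hF.to_subtype
    refine Finite.of_injective (fun q : A ⧸ L.subgroupOf A => f q.out⁻¹) fun q₁ q₂ h => ?_
    replace h : f q₁.out⁻¹ = f q₂.out⁻¹ := h
    rw [← q₁.out_eq, ← q₂.out_eq]
    apply QuotientGroup.eq.mpr
    have hmem := L.mul_mem (hf q₁.out⁻¹) (L.inv_mem (hf q₂.out⁻¹))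
    rw [h] at hmem
    simpa [mem_subgroupOf, mul_assoc] using hmem

theorem Subgroup.smul_coe_eq_map_conj_mul_singleton (H : Subgroup G) (g : G) :
    g • (H : Set G) = (H.map (MulAut.conj g).toMonoidHom : Set G) * {g} := by
  ext x
  simp [Set.mem_smul_set]

theorem forall_mem_exists_inv_mul_mem_iff_subset_mul_inv {X Y N : Set G} :
    (∀ x ∈ X, ∃ y ∈ Y, x⁻¹ * y ∈ N) ↔ X ⊆ Y * N⁻¹ := by
  refine forall₂_congr fun x _ =>
    ⟨fun ⟨y, hy, hn⟩ => ⟨y, hy, y⁻¹ * x, by simpa using hn, mul_inv_cancel_left y x⟩, ?_⟩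
  rintro ⟨y, hy, n, hn, rfl⟩
  exact ⟨y, hy, by simpa using hn⟩

theorem exists_mem_pow_of_closure_eq_top {S : Set G} (hgen : Subgroup.closure S = ⊤) (x : G) :
    ∃ K : ℕ, x ∈ (S ∪ S⁻¹ ∪ {1}) ^ K := by
  have hx : x ∈ Subgroup.closure S := hgen ▸ Subgroup.mem_top x
  induction hx using Subgroup.closure_induction_left with
  | one => exact ⟨0, rfl⟩
  | mul_left s hs y _ ih =>
    obtain ⟨K, hK⟩ := ih
    exact ⟨K + 1, pow_succ' (S ∪ S⁻¹ ∪ {1}) K ▸ Set.mul_mem_mul (by simp [hs]) hK⟩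
  | inv_mul_cancel s hs y _ ih =>
    obtain ⟨K, hK⟩ := ih
    exact ⟨K + 1, pow_succ' (S ∪ S⁻¹ ∪ {1}) K ▸ Set.mul_mem_mul (by simp [hs]) hK⟩

theorem Set.Finite.eventually_subset_pow {S F : Set G} (hgen : Subgroup.closure S = ⊤)
    (hF : F.Finite) : ∀ᶠ K in atTop, F ⊆ (S ∪ S⁻¹ ∪ {1}) ^ K := by
  refine (eventually_all_finite hF).2 fun x _ => ?_
  obtain ⟨K, hK⟩ := exists_mem_pow_of_closure_eq_top hgen x
  filter_upwards [eventually_ge_atTop K] with n hn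
  exact Set.pow_subset_pow_right (by simp) hn hK

theorem IsCoveredByFiniteTranslates.eventually_subset_mul_inv_pow {S X Y : Set G}
    (hgen : Subgroup.closure S = ⊤) (h : IsCoveredByFiniteTranslates X Y) :
    ∀ᶠ K in atTop, X ⊆ Y * ((S ∪ S⁻¹ ∪ {1}) ^ K)⁻¹ := by
  obtain ⟨F, hF, hX⟩ := h
  filter_upwards [hF.inv.eventually_subset_pow hgen] with K hK
  exact hX.trans (Set.mul_subset_mul_left (Set.inv_subset.mp hK))

end CoarseContainment

/-- `g ∈ Comm(H,G)` iff the Hausdorff distance between the cosets `H` and `gH` in the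
word metric of the finite generating set `S` is finite.  Here "`a` is within distance
`K` of `b`" is expressed as `a⁻¹ * b ∈ (S ∪ S⁻¹ ∪ {1}) ^ K`. -/
theorem mem_commensurator_iff_hausdorffDist_finite {G : Type*} [Group G]
    (S : Set G) (hSfin : S.Finite) (hgen : Subgroup.closure S = ⊤)
    (H : Subgroup G) (g : G) :
    ((H.map (MulAut.conj g).toMonoidHom ⊓ H).relIndex H ≠ 0 ∧
      (H.map (MulAut.conj g).toMonoidHom ⊓ H).relIndex
        (H.map (MulAut.conj g).toMonoidHom) ≠ 0) ↔
    ∃ K : ℕ,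
      (∀ a ∈ (H : Set G), ∃ b ∈ g • (H : Set G), a⁻¹ * b ∈ (S ∪ S⁻¹ ∪ {1}) ^ K) ∧
      (∀ b ∈ g • (H : Set G), ∃ a ∈ (H : Set G), b⁻¹ * a ∈ (S ∪ S⁻¹ ∪ {1}) ^ K) := by
  simp only [forall_mem_exists_inv_mul_mem_iff_subset_mul_inv,
    H.smul_coe_eq_map_conj_mul_singleton]
  rw [Subgroup.inf_relIndex_right, Subgroup.inf_relIndex_left,
    Subgroup.relIndex_ne_zero_iff_isCoveredByFiniteTranslates,
    Subgroup.relIndex_ne_zero_iff_isCoveredByFiniteTranslates,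
    ← isCoveredByFiniteTranslates_mul_singleton_right_iff (X := H) g,
    ← isCoveredByFiniteTranslates_mul_singleton_left_iff (Y := H) g]
  constructor
  · rintro ⟨hH, hHg⟩
    exact ((hH.eventually_subset_mul_inv_pow hgen).and
      (hHg.eventually_subset_mul_inv_pow hgen)).exists
  · rintro ⟨K, hH, hHg⟩
    have hball : ((S ∪ S⁻¹ ∪ {1}) ^ K)⁻¹.Finite :=
      (((hSfin.union hSfin.inv).union (Set.finite_singleton 1)).pow K).inv
    exact ⟨⟨_, hball, hH⟩, ⟨_, hball, hHg⟩⟩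
end

section
/- Let G be a group with finite generating set S and let H ≤ G. For g ∈ G, the Hausdorff distance D_S(H, gH) between cosets H and gH is finite if and only if the Hausdorff distance D_S(H, gHg⁻¹) between the subgroups H and gHg⁻¹ is finite. -/
open Pointwise

private lemma T_inv_eq {G : Type*} [Group G] (S : Set G) :
    (S ∪ S⁻¹ ∪ {1} : Set G)⁻¹ = S ∪ S⁻¹ ∪ {1} := by
  simp [Set.union_inv, Set.union_comm S⁻¹ S]

private lemma T_pow_inv {G : Type*} [Group G] (S : Set G) (n : ℕ) :
    ((S ∪ S⁻¹ ∪ {1} : Set G) ^ n)⁻¹ = (S ∪ S⁻¹ ∪ {1}) ^ n := by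
  rw [← inv_pow, T_inv_eq]

private lemma mem_T_pow {G : Type*} [Group G] (S : Set G)
    (hgen : Subgroup.closure S = ⊤) (x : G) :
    ∃ n : ℕ, x ∈ (S ∪ S⁻¹ ∪ {1} : Set G) ^ n := by
  have hx : x ∈ Subgroup.closure S := by rw [hgen]; trivial
  induction hx using Subgroup.closure_induction with
  | mem y hy => exact ⟨1, by simpa using Or.inr (Or.inl hy)⟩
  | one => exact ⟨0, by simp⟩
  | mul y z _ _ hy hz =>
      obtain ⟨n, hn⟩ := hy
      obtain ⟨m, hm⟩ := hz
      exact ⟨n + m, by rw [pow_add]; exact Set.mul_mem_mul hn hm⟩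
  | inv y _ hy =>
      obtain ⟨n, hn⟩ := hy
      refine ⟨n, ?_⟩
      rw [← T_pow_inv]
      exact Set.inv_mem_inv.mpr hn

/-- The Hausdorff distance `D_S(H, gH)` is finite iff the Hausdorff distance
`D_S(H, gHg⁻¹)` is finite. -/
theorem hausdorffDist_coset_finite_iff_conj_finite {G : Type*} [Group G]
    (S : Set G) (hSfin : S.Finite) (hgen : Subgroup.closure S = ⊤)
    (H : Subgroup G) (g : G) :
    (∃ K : ℕ,
      (∀ a ∈ (H : Set G), ∃ b ∈ g • (H : Set G), a⁻¹ * b ∈ (S ∪ S⁻¹ ∪ {1}) ^ K) ∧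
      (∀ b ∈ g • (H : Set G), ∃ a ∈ (H : Set G), b⁻¹ * a ∈ (S ∪ S⁻¹ ∪ {1}) ^ K)) ↔
    (∃ K : ℕ,
      (∀ a ∈ (H : Set G), ∃ b ∈ (H.map (MulAut.conj g).toMonoidHom : Set G),
        a⁻¹ * b ∈ (S ∪ S⁻¹ ∪ {1}) ^ K) ∧
      (∀ b ∈ (H.map (MulAut.conj g).toMonoidHom : Set G), ∃ a ∈ (H : Set G),
        b⁻¹ * a ∈ (S ∪ S⁻¹ ∪ {1}) ^ K)) := by
  set T : Set G := S ∪ S⁻¹ ∪ {1} with hT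
  obtain ⟨m, hgm⟩ := mem_T_pow S hgen g
  have hginv : g⁻¹ ∈ T ^ m := by
    rw [← T_pow_inv S m]; exact Set.inv_mem_inv.mpr hgm
  -- membership characterizations
  have hcoset : ∀ b : G, b ∈ g • (H : Set G) ↔ ∃ h ∈ H, b = g * h := by
    intro b
    constructor
    · rintro ⟨h, hh, rfl⟩; exact ⟨h, hh, rfl⟩
    · rintro ⟨h, hh, rfl⟩; exact ⟨h, hh, rfl⟩
  have hconj : ∀ b : G, b ∈ (H.map (MulAut.conj g).toMonoidHom : Set G) ↔
      ∃ h ∈ H, b = g * h * g⁻¹ := by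
    intro b
    simp only [Subgroup.mem_map, SetLike.mem_coe, MulEquiv.coe_toMonoidHom,
      MulAut.conj_apply]
    constructor
    · rintro ⟨h, hh, rfl⟩; exact ⟨h, hh, rfl⟩
    · rintro ⟨h, hh, rfl⟩; exact ⟨h, hh, rfl⟩
  constructor
  · rintro ⟨K, h1, h2⟩
    refine ⟨K + m, ?_, ?_⟩
    · intro a ha
      obtain ⟨b, hb, hab⟩ := h1 a ha
      obtain ⟨h, hh, rfl⟩ := (hcoset b).mp hb
      refine ⟨g * h * g⁻¹, (hconj _).mpr ⟨h, hh, rfl⟩, ?_⟩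
      have : a⁻¹ * (g * h * g⁻¹) = (a⁻¹ * (g * h)) * g⁻¹ := by group
      rw [this, pow_add]
      exact Set.mul_mem_mul hab hginv
    · intro b hb
      obtain ⟨h, hh, rfl⟩ := (hconj b).mp hb
      obtain ⟨a, ha, hba⟩ := h2 (g * h) ((hcoset _).mpr ⟨h, hh, rfl⟩)
      refine ⟨a, ha, ?_⟩
      have : (g * h * g⁻¹)⁻¹ * a = g * ((g * h)⁻¹ * a) := by group
      rw [this, add_comm K m, pow_add]
      exact Set.mul_mem_mul hgm hba
  · rintro ⟨K, h1, h2⟩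
    refine ⟨K + m, ?_, ?_⟩
    · intro a ha
      obtain ⟨b, hb, hab⟩ := h1 a ha
      obtain ⟨h, hh, rfl⟩ := (hconj b).mp hb
      refine ⟨g * h, (hcoset _).mpr ⟨h, hh, rfl⟩, ?_⟩
      have : a⁻¹ * (g * h) = (a⁻¹ * (g * h * g⁻¹)) * g := by group
      rw [this, pow_add]
      exact Set.mul_mem_mul hab hgm
    · intro b hb
      obtain ⟨h, hh, rfl⟩ := (hcoset b).mp hb
      obtain ⟨a, ha, hba⟩ := h2 (g * h * g⁻¹) ((hconj _).mpr ⟨h, hh, rfl⟩)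
      refine ⟨a, ha, ?_⟩
      have : (g * h)⁻¹ * a = g⁻¹ * ((g * h * g⁻¹)⁻¹ * a) := by group
      rw [this, add_comm K m, pow_add]
      exact Set.mul_mem_mul hginv hba
end

section
/- If G is a finitely generated group with generating set S and Q is a commensurated subgroup of G, then the Schreier coset graph Λ(S,Q,G) is locally finite: each vertex gQ is adjacent to only finitely many cosets. -/
open Pointwise

def Commensurated {G : Type*} [Group G] (Q : Subgroup G) : Prop :=
  ∀ g : G, (Q.map (MulAut.conj g).toMonoidHom ⊓ Q).relIndex Q ≠ 0 ∧
    (Q.map (MulAut.conj g).toMonoidHom ⊓ Q).relIndex (Q.map (MulAut.conj g).toMonoidHom) ≠ 0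

/-! The neighbours of `gQ` along `s` are the cosets `gqsQ` with `q ∈ Q`, i.e. the translate by `g`
of the `Q`-orbit of `sQ`. The stabilizer of `sQ` in `Q` contains `Q ∩ sQs⁻¹`, which has finite
index in `Q` because `Q` is commensurated, so each such orbit is finite. -/

section

variable {G : Type*} [Group G] {Q : Subgroup G}

theorem map_conj_inf_subgroupOf_le_stabilizer_smul_coe (s : G) :
    (Q.map (MulAut.conj s).toMonoidHom ⊓ Q).subgroupOf Q ≤
      MulAction.stabilizer Q (s • (Q : Set G)) := by
  rintro q ⟨⟨w, hw, hwq⟩, -⟩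
  have hq : (q : G) * s = s * w := by
    simp only [MulEquiv.coe_toMonoidHom, MulAut.conj_apply, Subgroup.subtype_apply] at hwq
    rw [← hwq]
    group
  rw [MulAction.mem_stabilizer_iff, Subgroup.smul_def, smul_smul, hq, mul_smul,
    smul_coe_set hw]

theorem Commensurated.finite_orbit_smul_coe (hQ : Commensurated Q) (s : G) :
    (MulAction.orbit Q (s • (Q : Set G))).Finite := by
  apply Set.finite_of_ncard_ne_zero
  rw [← MulAction.index_stabilizer]
  exact ne_zero_of_dvd_ne_zero (hQ s).1
    (Subgroup.index_dvd_of_le (map_conj_inf_subgroupOf_le_stabilizer_smul_coe s))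

end

theorem schreierGraph_locallyFinite_general {G : Type*} [Group G]
    (S : Set G) (hSfin : S.Finite)
    (Q : Subgroup G) (hQ : Commensurated Q) (g : G) :
    {B : Set G | ∃ x ∈ g • (Q : Set G), ∃ s ∈ S ∪ S⁻¹, B = (x * s) • (Q : Set G)}.Finite := by
  have hcover :
      {B : Set G | ∃ x ∈ g • (Q : Set G), ∃ s ∈ S ∪ S⁻¹, B = (x * s) • (Q : Set G)} ⊆
        ⋃ s ∈ S ∪ S⁻¹, g • MulAction.orbit Q (s • (Q : Set G)) := by
    rintro B ⟨_, ⟨q, hq, rfl⟩, s, hs, rfl⟩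
    refine Set.mem_biUnion hs ⟨_, ⟨⟨q, hq⟩, rfl⟩, ?_⟩
    simp only [Subgroup.mk_smul, smul_eq_mul, mul_smul]
  exact ((hSfin.union hSfin.inv).biUnion fun s _ =>
    (hQ.finite_orbit_smul_coe s).smul_set).subset hcover

/-- The Schreier coset graph `Λ(S,Q,G)` of a commensurated subgroup is locally finite:
each vertex `gQ` is adjacent to only finitely many cosets. -/
theorem schreierGraph_locallyFinite {G : Type*} [Group G]
    (S : Set G) (hSfin : S.Finite) (hgen : Subgroup.closure S = ⊤)
    (Q : Subgroup G) (hQ : Commensurated Q) (g : G) :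
    {B : Set G | ∃ x ∈ g • (Q : Set G), ∃ s ∈ S ∪ S⁻¹, B = (x * s) • (Q : Set G)}.Finite :=
  schreierGraph_locallyFinite_general S hSfin Q hQ g
end

section
/- Let G be a group with finite generating set S and let Q be a commensurated subgroup of G. Then there exists an integer F such that: whenever the cosets gQ and hQ are joined by an edge labeled s ∈ S^{±1} in the Schreier graph Λ(S,Q,G), for every vertex v ∈ gQ of the Cayley graph Γ(G,S) there exists q ∈ Q with word length |q|_S < F (with respect to a fixed finite generating set of Q contained in S) such that vqs ∈ hQ. -/
open Pointwise

/-!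
Fix an edge `gQ —s→ hQ`, witnessed by `x ∈ gQ` with `x s ∈ hQ`, and a vertex `v ∈ gQ`. Then
`v q s ∈ hQ` as soon as `x⁻¹ v q ∈ sQs⁻¹`. Since `sQs⁻¹ ∩ Q` has finite index in `Q`, a finite
set of coset representatives in `Q` provides such a `q` for every `x⁻¹ v ∈ Q`, and these
finitely many representatives have bounded word length. Finitely many labels `s` give a uniform
bound.
-/

section

variable {G : Type*} [Group G]

theorem exists_mem_pow_of_mem_closure {T : Set G} {q : G} (hq : q ∈ Subgroup.closure T) :
    ∃ k : ℕ, q ∈ (T ∪ T⁻¹ ∪ {1}) ^ k := by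
  induction hq using Subgroup.closure_induction with
  | mem x hx => exact ⟨1, by simp [hx]⟩
  | one => exact ⟨0, by simp⟩
  | mul x y _ _ hx hy =>
    obtain ⟨a, ha⟩ := hx
    obtain ⟨b, hb⟩ := hy
    exact ⟨a + b, pow_add (T ∪ T⁻¹ ∪ {1}) a b ▸ Set.mul_mem_mul ha hb⟩
  | inv x _ hx =>
    obtain ⟨a, ha⟩ := hx
    have hsymm : (T ∪ T⁻¹ ∪ {1})⁻¹ = T ∪ T⁻¹ ∪ {1} := by simp [Set.union_comm T]
    exact ⟨a, hsymm ▸ inv_pow (T ∪ T⁻¹ ∪ {1}) a ▸ Set.inv_mem_inv.mpr ha⟩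

theorem exists_pow_bound_of_finite {T R : Set G} (hR : R.Finite)
    (hRT : R ⊆ Subgroup.closure T) :
    ∃ F : ℕ, ∀ r ∈ R, ∃ k < F, r ∈ (T ∪ T⁻¹ ∪ {1}) ^ k := by
  choose len hlen using fun r : R => exists_mem_pow_of_mem_closure (hRT r.2)
  have : Finite R := hR
  obtain ⟨N, hN⟩ := Finite.exists_le len
  exact ⟨N + 1, fun r hr => ⟨len ⟨r, hr⟩, Nat.lt_succ_of_le (hN _), hlen _⟩⟩

theorem Subgroup.exists_finite_mul_mem_of_relIndex_ne_zero {H K : Subgroup G}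
    (hHK : H.relIndex K ≠ 0) :
    ∃ R : Set G, R.Finite ∧ R ⊆ K ∧ ∀ k ∈ K, ∃ r ∈ R, k * r ∈ H := by
  have : Finite (K ⧸ H.subgroupOf K) := Nat.finite_of_card_ne_zero hHK
  refine ⟨Set.range fun c : K ⧸ H.subgroupOf K => (c.out : G), Set.finite_range _,
    Set.range_subset_iff.mpr fun c => c.out.2, fun k hk => ?_⟩
  let c : K ⧸ H.subgroupOf K := QuotientGroup.mk (⟨k, hk⟩ : K)⁻¹
  obtain ⟨z, hz⟩ := QuotientGroup.mk_out_eq_mul (H.subgroupOf K) (⟨k, hk⟩ : K)⁻¹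
  have hkz : (⟨k, hk⟩ : K) * c.out = z := by
    rw [hz]; group
  exact ⟨_, Set.mem_range_self c, Subgroup.mem_subgroupOf.mp (hkz ▸ z.2)⟩

theorem exists_short_mul_mem_of_relIndex_ne_zero {H : Subgroup G} {T : Set G}
    (hH : H.relIndex (Subgroup.closure T) ≠ 0) :
    ∃ F : ℕ, ∀ k ∈ Subgroup.closure T, ∃ q ∈ Subgroup.closure T,
      (∃ n < F, q ∈ (T ∪ T⁻¹ ∪ {1}) ^ n) ∧ k * q ∈ H := by
  obtain ⟨R, hRfin, hRK, hR⟩ := Subgroup.exists_finite_mul_mem_of_relIndex_ne_zero hH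
  obtain ⟨F, hF⟩ := exists_pow_bound_of_finite hRfin hRK
  refine ⟨F, fun k hk => ?_⟩
  obtain ⟨r, hr, hkr⟩ := hR k hk
  exact ⟨r, hRK hr, hF r hr, hkr⟩

theorem mul_mem_smul_of_inv_mul_mem_map_conj {Q : Subgroup G} {h x y s : G}
    (hxs : x * s ∈ h • (Q : Set G)) (hy : x⁻¹ * y ∈ Q.map (MulAut.conj s).toMonoidHom) :
    y * s ∈ h • (Q : Set G) := by
  rw [mem_leftCoset_iff] at hxs ⊢
  obtain ⟨z, hz, hzy⟩ := Subgroup.mem_map.mp hy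
  simp only [MulEquiv.coe_toMonoidHom, MulAut.conj_apply] at hzy
  have hys : h⁻¹ * (y * s) = h⁻¹ * (x * s) * z := by
    rw [eq_inv_mul_iff_mul_eq.mpr hzy.symm]; group
  rw [hys]
  exact Q.mul_mem hxs hz

end

theorem approximate_lifting_general {G : Type*} [Group G]
    (S : Set G) (hSfin : S.Finite)
    (Q : Subgroup G) (hQ : Commensurated Q)
    (T : Set G) (hT : Subgroup.closure T = Q) :
    ∃ F : ℕ, ∀ g h s : G, s ∈ S ∪ S⁻¹ →
      (∃ x ∈ g • (Q : Set G), x * s ∈ h • (Q : Set G)) →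
      ∀ v ∈ g • (Q : Set G), ∃ q ∈ (Q : Set G),
        (∃ k < F, q ∈ (T ∪ T⁻¹ ∪ {1}) ^ k) ∧ v * q * s ∈ h • (Q : Set G) := by
  subst hT
  choose F hF using fun s : G => exists_short_mul_mem_of_relIndex_ne_zero
    (H := (Subgroup.closure T).map (MulAut.conj s).toMonoidHom)
    (by simpa only [Subgroup.inf_relIndex_right] using (hQ s).1)
  obtain ⟨N, hN⟩ := ((hSfin.union hSfin.inv).image F).bddAbove
  refine ⟨N, fun g h s hs ⟨x, hx, hxs⟩ v hv => ?_⟩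
  have hxv : x⁻¹ * v ∈ Subgroup.closure T := by
    simpa [mul_assoc] using Subgroup.mul_mem _ (inv_mem ((mem_leftCoset_iff g).mp hx))
      ((mem_leftCoset_iff g).mp hv)
  obtain ⟨q, hq, ⟨k, hk, hkq⟩, hxvq⟩ := hF s _ hxv
  refine ⟨q, hq, ⟨k, hk.trans_le (hN ⟨s, hs, rfl⟩), hkq⟩, ?_⟩
  rw [mul_assoc] at hxvq
  exact mul_mem_smul_of_inv_mul_mem_map_conj hxs hxvq

/-- Approximate path-lifting: there is a uniform `F` such that whenever cosets `gQ` and `hQ`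
are joined by an edge labeled `s ∈ S^{±1}` of the Schreier graph, every vertex `v ∈ gQ`
admits a `Q`-word `q` of length `< F` (in the generators `T ⊆ S` of `Q`) with `v * q * s ∈ hQ`. -/
theorem approximate_lifting {G : Type*} [Group G]
    (S : Set G) (hSfin : S.Finite) (hgen : Subgroup.closure S = ⊤)
    (Q : Subgroup G) (hQ : Commensurated Q)
    (T : Set G) (hTS : T ⊆ S) (hT : Subgroup.closure T = Q) :
    ∃ F : ℕ, ∀ g h s : G, s ∈ S ∪ S⁻¹ →
      (∃ x ∈ g • (Q : Set G), x * s ∈ h • (Q : Set G)) →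
      ∀ v ∈ g • (Q : Set G), ∃ q ∈ (Q : Set G),
        (∃ k < F, q ∈ (T ∪ T⁻¹ ∪ {1}) ^ k) ∧ v * q * s ∈ h • (Q : Set G) :=
  approximate_lifting_general S hSfin Q hQ T hT
end

section
/- Let 𝒢 be a locally finite, connected, infinite graph. Then for each vertex v of 𝒢 there exists a proper edge-path ray s_v starting at v such that for every finite subgraph C of 𝒢, only finitely many of the rays s_v intersect C. -/
/-!
Fix a base vertex `c`. For each `v`, let `ρ v` be the largest radius `ρ ≤ dist v c` for which
`v` lies in an infinite component of the complement of the ball `B(c, ρ)` (`ρ = 0` qualifies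
because the graph is connected and infinite), and let the ray from `v` be a geodesic ray inside
that component, which exists by König's lemma. If the ray from `v` meets a finite set
`C ⊆ B(c, R)`, then `ρ v < R`, so `v` lies in `B(c, R)` or in a finite component of its
complement. Balls are finite and the complement of a finite set has only finitely many
components, so there are only finitely many such `v`.
-/

open Set

namespace SimpleGraph

variable {V : Type*} {G : SimpleGraph V}

/-- The vertices `x` such that some shortest walk from `v` to `x` passes through `u`. -/
def shadow (G : SimpleGraph V) (v u : V) : Set V :=
  {x | G.Reachable u x ∧ G.dist v x = G.dist v u + G.dist u x}

theorem shadow_self (v : V) : G.shadow v v = {x | G.Reachable v x} := by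
  simp [shadow]

theorem shadow_diff_singleton_subset {v u : V} (hu : G.Reachable v u) :
    G.shadow v u \ {u} ⊆
      ⋃ w ∈ {w | G.Adj u w ∧ G.dist v w = G.dist v u + 1}, G.shadow v w := by
  rintro x ⟨⟨hux, hx⟩, hxu⟩
  obtain ⟨p, hp⟩ := hux.exists_walk_length_eq_dist
  cases p with
  | nil => exact absurd rfl hxu
  | @cons _ w _ huw q =>
    rw [Walk.length_cons] at hp
    have hwx : G.dist w x ≤ q.length := dist_le q
    have hvw : G.dist v w ≤ G.dist v u + 1 := by
      simpa [dist_eq_one_iff_adj.2 huw] using hu.dist_triangle_left w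
    have hvx := (hu.trans huw.reachable).dist_triangle_left x
    exact mem_biUnion (x := w) ⟨huw, by omega⟩ ⟨q.reachable, by omega⟩

theorem exists_adj_shadow_infinite (hlf : ∀ v : V, (G.neighborSet v).Finite) {v u : V}
    (hu : G.Reachable v u) (h : (G.shadow v u).Infinite) :
    ∃ w, G.Adj u w ∧ G.dist v w = G.dist v u + 1 ∧ (G.shadow v w).Infinite := by
  by_contra! hfin
  refine h ((Set.Finite.biUnion ((hlf u).subset fun w hw => hw.1) fun w hw =>
    hfin w hw.1 hw.2).subset (shadow_diff_singleton_subset hu) |>.of_sdiff (finite_singleton u))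

/-- König's lemma. The ray constructed is geodesic: `dist v (r n) = n`. -/
theorem exists_injective_ray (hlf : ∀ v : V, (G.neighborSet v).Finite) {v : V}
    (h : {x | G.Reachable v x}.Infinite) :
    ∃ r : ℕ → V, r 0 = v ∧ (∀ n, G.Adj (r n) (r (n + 1))) ∧ Function.Injective r := by
  let S := {u // G.Reachable v u ∧ (G.shadow v u).Infinite}
  have step : ∀ u : S, ∃ w : S, G.Adj u.1 w.1 ∧ G.dist v w.1 = G.dist v u.1 + 1 := by
    rintro ⟨u, hu, hinf⟩
    obtain ⟨w, huw, hdist, hw⟩ := exists_adj_shadow_infinite hlf hu hinf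
    exact ⟨⟨w, hu.trans huw.reachable, hw⟩, huw, hdist⟩
  choose next hadj hdist using step
  let r : ℕ → S := fun n => next^[n] ⟨v, Reachable.refl v, by rwa [shadow_self]⟩
  have hr_succ : ∀ n, r (n + 1) = next (r n) := fun n => Function.iterate_succ_apply' ..
  have hr : ∀ n, G.dist v (r n).1 = n := by
    intro n
    induction n with
    | zero => exact dist_self
    | succ n ih => rw [hr_succ, hdist, ih]
  refine ⟨fun n => (r n).1, rfl, fun n => ?_, fun m n hmn => ?_⟩
  · simpa only [hr_succ] using hadj (r n)
  · rw [← hr m, ← hr n]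
    exact congrArg (G.dist v) hmn

theorem exists_injective_ray_notMem_of_infinite (hlf : ∀ v : V, (G.neighborSet v).Finite)
    {K : Set V} {v : V} (hv : v ∉ K) (h : (G.componentComplMk hv : Set V).Infinite) :
    ∃ r : ℕ → V, r 0 = v ∧ (∀ n, G.Adj (r n) (r (n + 1))) ∧ Function.Injective r ∧
      ∀ n, r n ∉ K := by
  have hlfK : ∀ y : ↥Kᶜ, ((G.induce Kᶜ).neighborSet y).Finite := fun y =>
    (hlf y).preimage Subtype.val_injective.injOn
  have hsub : (G.componentComplMk hv : Set V) ⊆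
      Subtype.val '' {y | (G.induce Kᶜ).Reachable ⟨v, hv⟩ y} := by
    rintro x ⟨hx, hxv⟩
    exact ⟨⟨x, hx⟩, (ConnectedComponent.exact hxv).symm, rfl⟩
  obtain ⟨r, hr0, hadj, hinj⟩ := exists_injective_ray hlfK ((h.mono hsub).of_image _)
  exact ⟨fun n => r n, congrArg Subtype.val hr0, hadj, Subtype.val_injective.comp hinj,
    fun n => (r n).2⟩

theorem finite_setOf_componentComplMk_finite (hlf : ∀ v : V, (G.neighborSet v).Finite)
    (hG : G.Preconnected) {K : Set V} (hK : K.Finite) :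
    {v | ∃ hv : v ∉ K, (G.componentComplMk hv : Set V).Finite}.Finite := by
  let : G.LocallyFinite := fun v => (hlf v).fintype
  have : Fact G.Preconnected := ⟨hG⟩
  have : Finite (G.ComponentCompl K) := by
    simpa using componentCompl_finite hK.toFinset
  refine (finite_iUnion fun C : {C : G.ComponentCompl K // (C : Set V).Finite} => C.2).subset ?_
  rintro v ⟨hv, hfin⟩
  exact mem_iUnion.2 ⟨⟨_, hfin⟩, componentComplMk_mem G hv⟩

theorem finite_ball (hlf : ∀ v : V, (G.neighborSet v).Finite) (c : V) (R : ℕ) :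
    (G.ball c R).Finite := by
  induction R with
  | zero => simp
  | succ R ih =>
    refine ((ih.biUnion fun z _ => hlf z).insert c).subset ?_
    intro x hx
    rcases eq_or_ne x c with rfl | hxc
    · exact mem_insert _ _
    obtain ⟨p, hp⟩ := (reachable_of_edist_ne_top (ne_top_of_lt hx)).exists_walk_length_eq_edist
    cases p with
    | nil => exact absurd rfl hxc
    | cons hxz q =>
      rw [mem_ball, ← hp, Walk.length_cons, Nat.cast_lt] at hx
      refine mem_insert_of_mem _ (mem_biUnion ?_ hxz.symm)
      exact (edist_le q).trans_lt (Nat.cast_lt.2 (Nat.lt_of_succ_lt_succ hx))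

theorem Connected.mem_ball_iff (hconn : G.Connected) {c v : V} {R : ℕ} :
    v ∈ G.ball c R ↔ G.dist v c < R := by
  rw [mem_ball, ← (hconn v c).coe_dist_eq_edist, Nat.cast_lt]

theorem Connected.exists_subset_ball (hconn : G.Connected) {C : Set V} (hC : C.Finite) (c : V) :
    ∃ R : ℕ, C ⊆ G.ball c R := by
  obtain ⟨B, hB⟩ := (hC.image (G.dist · c)).bddAbove
  exact ⟨B + 1, fun x hx =>
    hconn.mem_ball_iff.2 (Nat.lt_succ_of_le (hB (mem_image_of_mem _ hx)))⟩

theorem Connected.componentComplMk_ball_zero_eq_univ (hconn : G.Connected) {c v : V}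
    (hv : v ∉ G.ball c (0 : ℕ)) : (G.componentComplMk hv : Set V) = univ := by
  refine eq_univ_of_forall fun x => ?_
  have hx : x ∉ G.ball c (0 : ℕ) := by simp
  obtain ⟨w⟩ := hconn x v
  exact ⟨hx, ConnectedComponent.sound ⟨w.induce _ fun y _ => by simp⟩⟩

section escapeRadius

open Classical

noncomputable def escapeRadius (G : SimpleGraph V) (c v : V) : ℕ :=
  Nat.findGreatest (fun R : ℕ =>
    ∀ hv : v ∉ G.ball c R, (G.componentComplMk hv : Set V).Infinite) (G.dist v c)

theorem Connected.notMem_ball_escapeRadius (hconn : G.Connected) {c v : V} :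
    v ∉ G.ball c (escapeRadius G c v) :=
  hconn.mem_ball_iff.not.2 (not_lt.2 (Nat.findGreatest_le _))

theorem Connected.infinite_componentComplMk_escapeRadius [Infinite V] (hconn : G.Connected)
    (c v : V) :
    (G.componentComplMk (hconn.notMem_ball_escapeRadius (c := c) (v := v)) : Set V).Infinite :=
  Nat.findGreatest_spec (P := fun R : ℕ => ∀ hv : v ∉ G.ball c R,
      (G.componentComplMk hv : Set V).Infinite) (Nat.zero_le _)
    (fun hv => by simpa [hconn.componentComplMk_ball_zero_eq_univ hv] using infinite_univ) _

theorem finite_setOf_escapeRadius_lt (hlf : ∀ v : V, (G.neighborSet v).Finite)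
    (hconn : G.Connected) (c : V) (R : ℕ) : {v | escapeRadius G c v < R}.Finite := by
  refine ((finite_ball hlf c R).union (finite_setOf_componentComplMk_finite hlf hconn.preconnected
    (finite_ball hlf c R))).subset fun v hv => ?_
  by_cases hball : v ∈ G.ball c R
  · exact Or.inl hball
  refine Or.inr ⟨hball, not_infinite.1 fun hinf => not_le.2 (mem_ofPred.1 hv) ?_⟩
  exact Nat.le_findGreatest (not_lt.1 (hconn.mem_ball_iff.not.1 hball)) fun _ => hinf

end escapeRadius

end SimpleGraph

/-- In a locally finite, connected, infinite graph, one may choose at each vertex `v` a proper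
ray `r v` starting at `v` so that every finite set of vertices meets only finitely many of
the chosen rays. -/
theorem exists_proper_rays_escaping {V : Type*} (G : SimpleGraph V)
    (hlf : ∀ v : V, (G.neighborSet v).Finite) (hconn : G.Connected) (hinf : Infinite V) :
    ∃ r : V → ℕ → V,
      (∀ v : V, r v 0 = v) ∧
      (∀ (v : V) (n : ℕ), G.Adj (r v n) (r v (n + 1))) ∧
      (∀ C : Set V, C.Finite → ∀ v : V, {n : ℕ | r v n ∈ C}.Finite) ∧
      (∀ C : Set V, C.Finite → {v : V | ∃ n : ℕ, r v n ∈ C}.Finite) := by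
  obtain ⟨c⟩ : Nonempty V := inferInstance
  choose r hr0 hadj hinj hout using fun v =>
    SimpleGraph.exists_injective_ray_notMem_of_infinite hlf hconn.notMem_ball_escapeRadius
      (hconn.infinite_componentComplMk_escapeRadius c v)
  refine ⟨r, hr0, hadj, fun C hC v => hC.preimage (hinj v).injOn, fun C hC => ?_⟩
  obtain ⟨R, hCR⟩ := hconn.exists_subset_ball hC c
  refine (SimpleGraph.finite_setOf_escapeRadius_lt hlf hconn c R).subset fun v ⟨n, hn⟩ => ?_
  by_contra hle
  exact hout v n (SimpleGraph.ball_mono (Nat.cast_le.2 (not_lt.1 hle)) (hCR hn))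
end

section
/- Let G be a finitely generated group with generating set S containing a generating set of a subgroup Q, and suppose Q is infinite, finitely generated, commensurated in G, and of infinite index in G. Then the Cayley graph Γ(G,S) is one-ended: for every finite subset C of G, the complement G − C has exactly one component (in the Cayley graph) that is infinite, and any two elements outside a suitable larger finite set can be joined by a path avoiding C. -/
/-- `x` and `y` are joined by an edge path of the Cayley graph of `(G,S)` avoiding `C`. -/
def ConnAvoiding {G : Type*} [Group G] (S C : Set G) : G → G → Prop :=
  Relation.ReflTransGen (fun a b => a ∉ C ∧ b ∉ C ∧ a⁻¹ * b ∈ S ∪ S⁻¹)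

open Pointwise Subgroup

section

variable {G : Type*} [Group G]

namespace ConnAvoiding

variable {S T C : Set G} {x y z : G}

lemma trans (hxy : ConnAvoiding S C x y) (hyz : ConnAvoiding S C y z) : ConnAvoiding S C x z :=
  Relation.ReflTransGen.trans hxy hyz

lemma symm (h : ConnAvoiding S C x y) : ConnAvoiding S C y x := by
  have hinv : (S ∪ S⁻¹)⁻¹ = S ∪ S⁻¹ := by rw [Set.union_inv, inv_inv, Set.union_comm]
  refine Relation.ReflTransGen.mono (fun a b ⟨hb, ha, hba⟩ => ⟨ha, hb, ?_⟩) _ _ h.swap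
  rw [← hinv, ← inv_inv (a⁻¹ * b), mul_inv_rev, inv_inv, Set.inv_mem_inv]
  exact hba

lemma mono (hTS : T ⊆ S) (h : ConnAvoiding T C x y) : ConnAvoiding S C x y :=
  Relation.ReflTransGen.mono (fun _ _ ⟨ha, hb, hab⟩ =>
    ⟨ha, hb, Set.union_subset_union hTS (Set.inv_subset_inv.2 hTS) hab⟩) _ _ h

lemma notMem (hx : x ∉ C) (h : ConnAvoiding S C x y) : y ∉ C := by
  induction h with
  | refl => exact hx
  | tail _ step _ => exact step.2.1

lemma inv_mul_mem_closure (h : ConnAvoiding S C x y) : x⁻¹ * y ∈ closure S := by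
  induction h with
  | refl => simp
  | @tail b c _ step ih =>
    rw [show x⁻¹ * c = x⁻¹ * b * (b⁻¹ * c) by group]
    exact mul_mem ih (step.2.2.elim (subset_closure ·) (inv_subset_closure S ·))

end ConnAvoiding

/-- `P` plays the role of the set of prefixes of a word spelling `w`. -/
lemma exists_finite_connAvoiding_mul {S : Set G} {w : G} (hw : w ∈ closure S) :
    ∃ P ⊆ (closure S : Set G), P.Finite ∧
      ∀ (C : Set G) (a : G), (∀ p ∈ P, a * p ∉ C) → ConnAvoiding S C a (a * w) := by
  induction hw using closure_induction with
  | mem s hs =>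
    refine ⟨{1, s}, Set.insert_subset (one_mem _) (Set.singleton_subset_iff.2 (subset_closure hs)),
      Set.toFinite _, fun C a ha => .single ⟨?_, ha s (by simp), by simp [hs]⟩⟩
    simpa using ha 1 (by simp)
  | one => exact ⟨∅, Set.empty_subset _, Set.finite_empty, fun _ a _ => (mul_one a).symm ▸ .refl⟩
  | mul x y hx _ ihx ihy =>
    obtain ⟨P, hPS, hP, hPC⟩ := ihx
    obtain ⟨R, hRS, hR, hRC⟩ := ihy
    refine ⟨P ∪ x • R, Set.union_subset hPS ?_, hP.union (hR.image _), fun C a ha => ?_⟩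
    · rintro _ ⟨r, hr, rfl⟩
      exact mul_mem hx (hRS hr)
    · refine (hPC C a fun p hp => ha p (.inl hp)).trans ?_
      rw [← mul_assoc]
      exact hRC C (a * x) fun r hr => by
        simpa [mul_assoc] using ha (x * r) (.inr (Set.smul_mem_smul_set hr))
  | inv x hx ih =>
    obtain ⟨P, hPS, hP, hPC⟩ := ih
    refine ⟨x⁻¹ • P, ?_, hP.image _, fun C a ha => ?_⟩
    · rintro _ ⟨p, hp, rfl⟩
      exact mul_mem (inv_mem hx) (hPS hp)
    · simpa using (hPC C (a * x⁻¹) fun p hp => by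
        simpa [mul_assoc] using ha (x⁻¹ * p) (Set.smul_mem_smul_set hp)).symm

lemma connAvoiding_mul_of_forall_mul_notMem {S C : Set G} {a b c : G}
    (hC : ∀ q ∈ closure S, a * q ∉ C) (hb : b ∈ closure S) (hc : c ∈ closure S) :
    ConnAvoiding S C (a * b) (a * c) := by
  have path {w} (hw : w ∈ closure S) : ConnAvoiding S C a (a * w) := by
    obtain ⟨P, hPS, -, hPC⟩ := exists_finite_connAvoiding_mul hw
    exact hPC C a fun p hp => hC p (hPS hp)
  exact (path hb).symm.trans (path hc)

lemma ConnAvoiding.exists_mul_mem_of_finite {T C : Set G} {x : G} (hx : x ∉ C)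
    (hK : {z | ConnAvoiding T C x z}.Finite) (hT : (closure T : Set G).Infinite) :
    ∃ b, ConnAvoiding T C x b ∧ ∃ t ∈ T ∪ T⁻¹, b * t ∈ C := by
  by_contra! hno
  let M : Submonoid G :=
    { carrier := {g | ∀ b, ConnAvoiding T C x b → ConnAvoiding T C x (b * g)}
      one_mem' := fun b hb => by simpa using hb
      mul_mem' := fun hg hh b hb => by simpa [mul_assoc] using hh _ (hg b hb) }
  have hM : (closure T).toSubmonoid ≤ M := by
    rw [closure_toSubmonoid, Submonoid.closure_le]
    exact fun t ht b hb => hb.tail ⟨hb.notMem hx, hno b hb t ht, by simpa using ht⟩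
  refine hT ((hK.preimage (mul_right_injective x).injOn).subset fun q hq => ?_)
  simpa using hM hq x .refl

lemma finite_setOf_finite_connAvoiding {T C : Set G} (hT : T.Finite) (hC : C.Finite)
    (hTinf : (closure T : Set G).Infinite) :
    {x | x ∉ C ∧ {z | ConnAvoiding T C x z}.Finite}.Finite := by
  set s := {b ∈ C * (T ∪ T⁻¹)⁻¹ | {z | ConnAvoiding T C b z}.Finite}
  have hs : s.Finite := (hC.mul (hT.union hT.inv).inv).subset (Set.sep_subset _ _)
  refine (hs.biUnion fun b hb => hb.2).subset ?_
  rintro x ⟨hx, hK⟩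
  obtain ⟨b, hxb, t, ht, hbt⟩ := ConnAvoiding.exists_mul_mem_of_finite hx hK hTinf
  refine Set.mem_biUnion ⟨⟨b * t, hbt, t⁻¹, Set.inv_mem_inv.2 ht, mul_inv_cancel_right b t⟩,
    hK.subset fun z hz => hxb.trans hz⟩ hxb.symm

lemma exists_finite_subset_mul_of_relIndex_ne_zero {H K : Subgroup G} (h : H.relIndex K ≠ 0) :
    ∃ F : Set G, F.Finite ∧ (K : Set G) ⊆ F * H := by
  have : (H.subgroupOf K).FiniteIndex := ⟨h⟩
  refine ⟨Set.range fun c : K ⧸ H.subgroupOf K => (c.out : G), Set.finite_range _,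
    fun u hu => ?_⟩
  obtain ⟨k, hk⟩ := QuotientGroup.mk_out_eq_mul (H.subgroupOf K) ⟨u, hu⟩
  refine ⟨_, ⟨QuotientGroup.mk ⟨u, hu⟩, rfl⟩, (k : G)⁻¹, inv_mem k.2, ?_⟩
  simp [hk]

/-- In the word metric, `Q` lies in a bounded neighbourhood of the coset `g • Q`. -/
lemma Commensurated.exists_finite_forall_mul_mem {Q : Subgroup G} (hQ : Commensurated Q)
    (g : G) : ∃ F : Set G, F.Finite ∧ ∀ u ∈ Q, ∃ w ∈ F, u * w ∈ g • (Q : Set G) := by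
  obtain ⟨F, hF, hQF⟩ := exists_finite_subset_mul_of_relIndex_ne_zero (hQ g).1
  refine ⟨F * {g}, hF.mul (Set.finite_singleton g), fun u hu => ?_⟩
  obtain ⟨f, hf, c, ⟨⟨q, hq, rfl⟩, -⟩, hfc⟩ := hQF (inv_mem hu)
  refine ⟨f * g, Set.mul_mem_mul hf rfl, q⁻¹, inv_mem hq, ?_⟩
  rw [← inv_inv u, ← hfc]
  simp only [smul_eq_mul, MulEquiv.toMonoidHom_eq_coe, MonoidHom.coe_coe, MulAut.conj_apply,
    mul_inv_rev, inv_inv, mul_inv_mul_mul_cancel]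
  group

lemma Subgroup.exists_mul_notMem_of_index_eq_zero {Q : Subgroup G} (hQ : Q.index = 0)
    {C : Set G} (hC : C.Finite) : ∃ h : G, ∀ q ∈ Q, h * q ∉ C := by
  have := index_eq_zero_iff_infinite.1 hQ
  obtain ⟨_, hh⟩ := (Set.infinite_univ.sdiff (hC.image (QuotientGroup.mk (s := Q)))).nonempty
  obtain ⟨h, rfl⟩ := QuotientGroup.mk_surjective ‹G ⧸ Q›
  exact ⟨h, fun q hq hqC => hh.2 ⟨h * q, hqC, QuotientGroup.eq.2 (by simpa using inv_mem hq)⟩⟩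

lemma Commensurated.exists_mem_connAvoiding_mul {S C : Set G} {Q : Subgroup G}
    (hQ : Commensurated Q) (hgen : closure S = ⊤) (hC : C.Finite) {x : G}
    (hx : {z ∈ x • (Q : Set G) | ConnAvoiding S C x z}.Infinite) (h : G) :
    ∃ q ∈ Q, ConnAvoiding S C x (h * q) := by
  obtain ⟨F, hF, hFQ⟩ := hQ.exists_finite_forall_mul_mem (x⁻¹ * h)
  choose P _ hP hPC using fun w => exists_finite_connAvoiding_mul (hgen ▸ mem_top w)
  have hN : (⋃ w ∈ F, C * (P w)⁻¹).Finite := hF.biUnion fun w _ => hC.mul (hP w).inv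
  obtain ⟨p, ⟨hpQ, hxp⟩, hpN⟩ := (hx.sdiff hN).nonempty
  obtain ⟨w, hwF, q, hq, hpw⟩ := hFQ (x⁻¹ * p) ((mem_leftCoset_iff x).1 hpQ)
  have hpw : h * q = p * w := by simpa [mul_assoc] using hpw
  refine ⟨q, hq, hxp.trans ?_⟩
  rw [hpw]
  exact hPC w C p fun r hr hpr => hpN (Set.mem_biUnion hwF
    ⟨p * r, hpr, r⁻¹, Set.inv_mem_inv.2 hr, mul_inv_cancel_right p r⟩)

end

/-- If `Q` is an infinite, finitely generated, commensurated subgroup of infinite index in the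
finitely generated group `G`, then the Cayley graph `Γ(G,S)` is one-ended: for each finite
`C` there is a finite `D ⊇ C` such that any two elements outside `D` can be joined avoiding
`C`, and any two elements with infinite components of `G - C` lie in the same component. -/
theorem one_ended_of_commensurated {G : Type*} [Group G]
    (S : Set G) (hSfin : S.Finite) (hgen : Subgroup.closure S = ⊤)
    (Q : Subgroup G) (T : Set G) (hTS : T ⊆ S) (hT : Subgroup.closure T = Q)
    (hQinf : (Q : Set G).Infinite) (hcomm : Commensurated Q) (hindex : Q.index = 0) :
    ∀ C : Set G, C.Finite → ∃ D : Set G, C ⊆ D ∧ D.Finite ∧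
      (∀ x ∉ D, ∀ y ∉ D, ConnAvoiding S C x y) ∧
      (∀ x ∉ C, ∀ y ∉ C, {z | ConnAvoiding S C x z}.Infinite →
        {z | ConnAvoiding S C y z}.Infinite → ConnAvoiding S C x y) := by
  intro C hC
  obtain ⟨h, hh⟩ := Q.exists_mul_notMem_of_index_eq_zero hindex hC
  set D := C ∪ {x | x ∉ C ∧ {z | ConnAvoiding T C x z}.Finite}
  have hD : D.Finite :=
    hC.union (finite_setOf_finite_connAvoiding (hSfin.subset hTS) hC (hT ▸ hQinf))
  have hcoset (x) (hx : x ∉ D) : ∃ q ∈ Q, ConnAvoiding S C x (h * q) := by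
    have hK : {z | ConnAvoiding T C x z}.Infinite := fun hfin =>
      hx (.inr ⟨fun hxC => hx (.inl hxC), hfin⟩)
    refine hcomm.exists_mem_connAvoiding_mul hgen hC (hK.mono fun z hz => ?_) h
    exact ⟨(mem_leftCoset_iff x).2 (hT ▸ hz.inv_mul_mem_closure), hz.mono hTS⟩
  have hjoin : ∀ x ∉ D, ∀ y ∉ D, ConnAvoiding S C x y := by
    intro x hx y hy
    obtain ⟨q₁, hq₁, hxq₁⟩ := hcoset x hx
    obtain ⟨q₂, hq₂, hyq₂⟩ := hcoset y hy
    have hq₁₂ := connAvoiding_mul_of_forall_mul_notMem (S := T) (hT ▸ hh) (hT ▸ hq₁) (hT ▸ hq₂)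
    exact hxq₁.trans ((hq₁₂.mono hTS).trans hyq₂.symm)
  refine ⟨D, Set.subset_union_left, hD, hjoin, fun x _ y _ hx hy => ?_⟩
  obtain ⟨a, hxa, ha⟩ := (hx.sdiff hD).nonempty
  obtain ⟨b, hyb, hb⟩ := (hy.sdiff hD).nonempty
  exact hxa.trans ((hjoin a ha b hb).trans hyb.symm)
end

section
/- Let G = ⟨x, t | t⁻¹xᵐt = xⁿ⟩ be the Baumslag–Solitar group B(m,n) with m, n nonzero integers. Then the cyclic subgroup ⟨x⟩ is commensurated in G. -/
/-- The defining relator of the Baumslag–Solitar group `B(m,n)`: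
`t⁻¹ xᵐ t x⁻ⁿ`, where `x = FreeGroup.of false` and `t = FreeGroup.of true`. -/
def BSRels (m n : ℤ) : Set (FreeGroup Bool) :=
  {(FreeGroup.of true)⁻¹ * (FreeGroup.of false) ^ m * FreeGroup.of true *
    ((FreeGroup.of false) ^ n)⁻¹}

/-!
An element `g` commensurates `⟨x⟩` as soon as it conjugates some nonzero power of `x` to another
one, `g xᵏ g⁻¹ = xˡ`: then `⟨g x g⁻¹⟩` and `⟨x⟩` share the finite-index subgroup `⟨xˡ⟩`. Since the
commensurator is a subgroup, it is enough that both generators of `B(m,n)` do this: `x` trivially,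
and `t` because `t xⁿ t⁻¹ = xᵐ`.
-/

open Subgroup Subgroup.Commensurable
open scoped Pointwise

namespace Subgroup

variable {G : Type*} [Group G]

theorem relIndex_zpowers_zpow_ne_zero (x : G) {k : ℤ} (hk : k ≠ 0) :
    (zpowers (x ^ k)).relIndex (zpowers x) ≠ 0 := by
  -- pulled back along `j ↦ xʲ`, the subgroup `⟨xᵏ⟩` contains `kℤ`, which has index `|k|`
  have hle : (AddSubgroup.zmultiples k).toSubgroup ≤ (zpowers (x ^ k)).comap (zpowersHom G x) := by
    rintro a ⟨j, hj⟩
    simp only [mem_comap, zpowersHom_apply, ← hj]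
    exact ⟨j, by simp [← zpow_mul, mul_comm]⟩
  have hdvd := index_dvd_of_le hle
  rw [index_comap, range_zpowersHom, AddSubgroup.index_toSubgroup, Int.index_zmultiples] at hdvd
  exact fun h ↦ hk (Int.natAbs_eq_zero.mp (eq_zero_of_zero_dvd (h ▸ hdvd)))

theorem commensurable_zpowers_zpow (x : G) {k : ℤ} (hk : k ≠ 0) :
    Commensurable (zpowers (x ^ k)) (zpowers x) :=
  ⟨relIndex_zpowers_zpow_ne_zero x hk,
    (relIndex_eq_one.mpr (zpowers_le.mpr (zpow_mem_zpowers x k))).symm ▸ one_ne_zero⟩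

theorem commensurable_zpowers_of_zpow_eq {x y : G} {k l : ℤ} (hk : k ≠ 0) (hl : l ≠ 0)
    (h : x ^ k = y ^ l) : Commensurable (zpowers x) (zpowers y) :=
  (commensurable_zpowers_zpow x hk).symm.trans (h ▸ commensurable_zpowers_zpow y hl)

theorem mem_commensurator_zpowers_of_conj_zpow_eq {g x : G} {k l : ℤ} (hk : k ≠ 0) (hl : l ≠ 0)
    (h : g * x ^ k * g⁻¹ = x ^ l) : g ∈ commensurator (zpowers x) := by
  have hconj : ConjAct.toConjAct g • zpowers x = zpowers (g * x * g⁻¹) := by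
    change (zpowers x).map (MulAut.conj g).toMonoidHom = _
    rw [MonoidHom.map_zpowers]
    rfl
  rw [commensurator_mem_iff, hconj]
  exact commensurable_zpowers_of_zpow_eq hk hl (by rw [conj_zpow, h])

end Subgroup

theorem commensurated_iff_commensurator_eq_top {G : Type*} [Group G] (Q : Subgroup G) :
    Commensurated Q ↔ commensurator Q = ⊤ := by
  simp only [Commensurated, eq_top_iff', commensurator_mem_iff, Commensurable,
    inf_relIndex_right, inf_relIndex_left]
  -- `ConjAct.toConjAct g • Q` unfolds to `Q.map (MulAut.conj g).toMonoidHom`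
  rfl

theorem baumslagSolitar_relation (m n : ℤ) :
    (PresentedGroup.of true)⁻¹ * PresentedGroup.of false ^ m * PresentedGroup.of true =
      (PresentedGroup.of (rels := BSRels m n) false) ^ n := by
  have h := PresentedGroup.mk_eq_mk_of_mul_inv_mem (rels := BSRels m n) rfl
  rw [map_mul, map_mul, map_inv, map_zpow, map_zpow] at h
  exact h

/-- In the Baumslag–Solitar group `B(m,n)` (with `m, n ≠ 0`), the cyclic subgroup `⟨x⟩`
is commensurated. -/
theorem cyclic_commensurated_in_BS (m n : ℤ) (hm : m ≠ 0) (hn : n ≠ 0) :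
    Commensurated (Subgroup.closure {PresentedGroup.of (rels := BSRels m n) false}) := by
  rw [← zpowers_eq_closure, commensurated_iff_commensurator_eq_top, eq_top_iff]
  intro g _
  refine PresentedGroup.generated_by _ _ (fun b ↦ ?_) g
  cases b
  · exact mem_commensurator_zpowers_of_conj_zpow_eq one_ne_zero one_ne_zero (by group)
  · refine mem_commensurator_zpowers_of_conj_zpow_eq hn hm ?_
    rw [← baumslagSolitar_relation]
    group
end
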